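/- Let (β, γ) ∈ 𝔅^r_m × 𝔅^s_m with r, s even and positive, β = (b_0,…,b_{r+1}), γ = (c_0,…,c_{s+1}), and b_{r+1} + c_{s+1} = 0 with b_{r+1} ≠ 0. Then β#γ = (b_0,…,b_r, c_0,…,c_s) lies in 𝔅^{r+s}_m. -/
import Mathlib


/-- The set `𝔅^{2q}_m`, for tuples of length `l = 2q + 2`. -/
def BSet (m l q : ℕ) : Set (Fin l → ZMod m) :=
  {α | (∀ i, α i ≠ 0) ∧ (∑ i, α i = 0) ∧
    ∀ t : (ZMod m)ˣ, ∑ i, ((t : ZMod m) * α i).val = m * (q + 1)}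

/-- If `r = 2p' > 0` and `s = 2q' > 0` are even, `β ∈ 𝔅^r_m`, `γ ∈ 𝔅^s_m`, and the last
entries satisfy `b_{r+1} + c_{s+1} = 0` with `b_{r+1} ≠ 0`, then `β#γ`, the concatenation of
the first `r+1` entries of `β` with the first `s+1` entries of `γ`, lies in `𝔅^{r+s}_m`. -/
theorem hash_mem_BSet (m p' q' : ℕ) (hm : 2 ≤ m) (hp' : 0 < p') (hq' : 0 < q')
    (β : Fin (2 * p' + 2) → ZMod m) (γ : Fin (2 * q' + 2) → ZMod m)
    (hβ : β ∈ BSet m (2 * p' + 2) p') (hγ : γ ∈ BSet m (2 * q' + 2) q')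
    (hlast : β (Fin.last (2 * p' + 1)) + γ (Fin.last (2 * q' + 1)) = 0)
    (hlast' : β (Fin.last (2 * p' + 1)) ≠ 0) :
    Fin.append (fun i : Fin (2 * p' + 1) => β i.castSucc)
        (fun j : Fin (2 * q' + 1) => γ j.castSucc)
      ∈ BSet m ((2 * p' + 1) + (2 * q' + 1)) (p' + q') := by
  haveI : NeZero m := ⟨by omega⟩
  obtain ⟨hβ1, hβ2, hβ3⟩ := hβ
  obtain ⟨hγ1, hγ2, hγ3⟩ := hγ
  have hγl : γ (Fin.last (2 * q' + 1)) = - β (Fin.last (2 * p' + 1)) :=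
    eq_neg_of_add_eq_zero_right hlast
  refine ⟨?_, ?_, ?_⟩
  · intro i
    refine Fin.addCases (fun i => ?_) (fun j => ?_) i
    · rw [Fin.append_left]; exact hβ1 _
    · rw [Fin.append_right]; exact hγ1 _
  · rw [Fin.sum_univ_add]
    simp only [Fin.append_left, Fin.append_right]
    have e1 : ∑ i : Fin (2 * p' + 1), β i.castSucc = - β (Fin.last (2 * p' + 1)) := by
      have := Fin.sum_univ_castSucc (f := β)
      rw [this] at hβ2
      exact eq_neg_of_add_eq_zero_left hβ2
    have e2 : ∑ j : Fin (2 * q' + 1), γ j.castSucc = - γ (Fin.last (2 * q' + 1)) := by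
      have := Fin.sum_univ_castSucc (f := γ)
      rw [this] at hγ2
      exact eq_neg_of_add_eq_zero_left hγ2
    rw [e1, e2, ← neg_add, hlast, neg_zero]
  · intro t
    have hb3 := hβ3 t
    have hc3 := hγ3 t
    rw [Fin.sum_univ_castSucc (f := fun i => ((t : ZMod m) * β i).val)] at hb3
    rw [Fin.sum_univ_castSucc (f := fun i => ((t : ZMod m) * γ i).val)] at hc3
    have hx : ((t : ZMod m) * β (Fin.last (2 * p' + 1))) ≠ 0 := fun h =>
      hlast' ((Units.mul_right_eq_zero t).mp h)
    have hv : ((t : ZMod m) * β (Fin.last (2 * p' + 1))).val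
        + ((t : ZMod m) * γ (Fin.last (2 * q' + 1))).val = m := by
      rw [hγl, mul_neg, ZMod.neg_val, if_neg hx]
      have := ZMod.val_lt ((t : ZMod m) * β (Fin.last (2 * p' + 1)))
      omega
    rw [Fin.sum_univ_add]
    simp only [Fin.append_left, Fin.append_right]
    refine Nat.add_right_cancel (m := m) ?_
    calc (∑ i : Fin (2 * p' + 1), ((t : ZMod m) * β i.castSucc).val)
          + (∑ j : Fin (2 * q' + 1), ((t : ZMod m) * γ j.castSucc).val) + m
        = ((∑ i : Fin (2 * p' + 1), ((t : ZMod m) * β i.castSucc).val)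
            + ((t : ZMod m) * β (Fin.last (2 * p' + 1))).val)
          + ((∑ j : Fin (2 * q' + 1), ((t : ZMod m) * γ j.castSucc).val)
            + ((t : ZMod m) * γ (Fin.last (2 * q' + 1))).val) := by
          linarith [hv]
      _ = m * (p' + 1) + m * (q' + 1) := by rw [hb3, hc3]
      _ = m * (p' + q' + 1) + m := by ring
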